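/- If F is a subfield of ℂ and Ψ is a W-graph over F, then ⟨M(Ψ), ind⟩ = dim_{F(u)} M(Ψ)_{ind} ≤ N_Ψ(∅), the number of vertices x of Ψ with I_x = ∅. -/

import Mathlib

open scoped Classical

noncomputable section

/-- The combinatorial data of a `W`-digraph over the index set `B` of the simple reflections:
for each label `i : B`, every vertex `v` lies on exactly one edge with label `i`, joining `v`
to `mate i v ≠ v`; `head i v` records whether `v` is the head (i.e. the edge is directed into
`v`), and `dash i v` whether that edge is dashed (as opposed to solid). -/
structure WDigraphData (B V : Type*) where
  mate : B → V → V
  head : B → V → Bool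
  dash : B → V → Bool
  mate_mate : ∀ i v, mate i (mate i v) = v
  mate_ne : ∀ i v, mate i v ≠ v
  head_mate : ∀ i v, head i (mate i v) = !(head i v)
  dash_mate : ∀ i v, dash i (mate i v) = dash i v

namespace WDigraphData

variable {B V : Type*} (Γ : WDigraphData B V)

/-- `Γ` has a solid edge `a → b` with label `i`. -/
def Solid (i : B) (a b : V) : Prop :=
  Γ.head i a = false ∧ Γ.dash i a = false ∧ Γ.mate i a = b

/-- `Γ` has a dashed edge `a ⇢ b` with label `i`. -/
def Dashed (i : B) (a b : V) : Prop :=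
  Γ.head i a = false ∧ Γ.dash i a = true ∧ Γ.mate i a = b

/-- There is a directed edge (solid or dashed) from `a` to `b` in `Γ`. -/
def DirEdge (a b : V) : Prop :=
  ∃ i, Γ.head i a = false ∧ Γ.mate i a = b

/-- `Γ.In v` is the set of labels of edges of `Γ` directed into `v`. -/
def In (v : V) : Set B := {i | Γ.head i v = true}

/-- `N_Γ(J)`: the number of vertices `v` with `In(v) = J`. -/
def N (J : Set B) : ℕ := Nat.card {v : V // Γ.In v = J}

/-- The underlying undirected graph of `Γ`. -/
def underlying : SimpleGraph V where
  Adj a b := ∃ i, Γ.mate i a = b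
  symm := by
    refine ⟨?_⟩
    rintro a b ⟨i, rfl⟩
    exact ⟨i, Γ.mate_mate i a⟩
  loopless := by
    refine ⟨?_⟩
    rintro a ⟨i, h⟩
    exact Γ.mate_ne i a h

/-- `Γ` contains a closed directed path of positive length. -/
def HasDirCycle : Prop :=
  ∃ (n : ℕ) (f : ℕ → V), 0 < n ∧ f n = f 0 ∧ ∀ k < n, Γ.DirEdge (f k) (f (k + 1))

/-- `Γ` is acyclic: it contains no closed directed path of positive length. -/
def Acyclic : Prop := ¬ Γ.HasDirCycle

/-- The connected component `c` of `Γ` is acyclic: `Γ` has no closed directed path of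
positive length lying in `c`. -/
def AcyclicComponent (c : Γ.underlying.ConnectedComponent) : Prop :=
  ¬ ∃ (n : ℕ) (f : ℕ → V), 0 < n ∧ f n = f 0 ∧
      (∀ k < n, Γ.DirEdge (f k) (f (k + 1))) ∧ Γ.underlying.connectedComponentMk (f 0) = c

/-- `Γ_J`: remove from `Γ` all edges whose labels lie outside `J`. -/
def restrict (J : Set B) : WDigraphData J V where
  mate i v := Γ.mate i v
  head i v := Γ.head i v
  dash i v := Γ.dash i v
  mate_mate i v := Γ.mate_mate i v
  mate_ne i v := Γ.mate_ne i v
  head_mate i v := Γ.head_mate i v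
  dash_mate i v := Γ.dash_mate i v

variable (K : Type*) [Field K] (q : K)

/-- The image of a basis vector `v` under the operator `τ_i` giving the action of `T_{s_i}`
on `M(Γ)`: for a solid edge `α → β` with label `i`, `T_{s_i} α = β` and
`T_{s_i} β = q²α + (q²−1)β`; for a dashed edge `α ⇢ β` with label `i`,
`T_{s_i} α = qα + (q+1)β` and `T_{s_i} β = (q²−q)α + (q²−q−1)β`. -/
def tauFun (i : B) (v : V) : V →₀ K :=
  if Γ.head i v then
    if Γ.dash i v then
      (q ^ 2 - q) • Finsupp.single (Γ.mate i v) 1 + (q ^ 2 - q - 1) • Finsupp.single v 1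
    else
      q ^ 2 • Finsupp.single (Γ.mate i v) 1 + (q ^ 2 - 1) • Finsupp.single v 1
  else
    if Γ.dash i v then
      q • Finsupp.single v 1 + (q + 1) • Finsupp.single (Γ.mate i v) 1
    else
      Finsupp.single (Γ.mate i v) 1

/-- The operator `τ_i` on the free module `M(Γ)` with basis the vertices of `Γ`. -/
def tau (i : B) : (V →₀ K) →ₗ[K] (V →₀ K) :=
  Finsupp.lsum K fun v => LinearMap.toSpanSingleton K (V →₀ K) (Γ.tauFun K q i v)

end WDigraphData

/-- The data of a `W`-graph in the sense of Gyoja: vertex set `X`, vertex labels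
`I x ⊆ B`, and edge weights `mu : X × X → F`. -/
structure WGraphData (B X F : Type*) where
  I : X → Set B
  mu : X → X → F

namespace WGraphData

variable {B X F : Type*} (Ψ : WGraphData B X F)
variable (K : Type*) [Field F] [Field K] [Algebra F K] [Fintype X] (q : K)

/-- The image of the basis vector `x` under the operator by which `T_{s_i}` acts on `M(Ψ)`:
`T_{s_i} x = −x` if `i ∈ I x`, and `T_{s_i} x = q²x + q Σ_{y, i ∈ I y} μ(y,x) y` otherwise. -/
def tauFun (i : B) (x : X) : X →₀ K :=
  if i ∈ Ψ.I x then -Finsupp.single x 1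
  else q ^ 2 • Finsupp.single x 1 +
    q • ∑ y : X, if i ∈ Ψ.I y then algebraMap F K (Ψ.mu y x) • Finsupp.single y (1 : K) else 0

/-- The operator by which `T_{s_i}` acts on the free module `M(Ψ)` with basis `X`. -/
def tau (i : B) : (X →₀ K) →ₗ[K] (X →₀ K) :=
  Finsupp.lsum K fun x => LinearMap.toSpanSingleton K (X →₀ K) (Ψ.tauFun K q i x)

/-- `N_Ψ(J)`: the number of vertices `x` with `I x = J`. -/
def N (J : Set B) : ℕ := Nat.card {x : X // Ψ.I x = J}

end WGraphData

/-- For a module structure on `M` given by an algebra morphism `ρ : H → End M` and a linear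
character `lam` of `H`, the eigenspace `M_lam = {v ∈ M | h v = lam(h) v for all h ∈ H}`. -/
def charSpace {K M H : Type*} [Field K] [AddCommGroup M] [Module K M] [Ring H] [Algebra K H]
    (ρ : H →ₐ[K] Module.End K M) (lam : H →ₐ[K] K) : Submodule K M where
  carrier := {v | ∀ h, ρ h v = lam h • v}
  add_mem' := by
    intro a b ha hb h
    rw [map_add, ha h, hb h, ← smul_add]
  zero_mem' := by
    intro h
    rw [map_zero, smul_zero]
  smul_mem' := by
    intro c a ha h
    rw [map_smul, ha h, smul_comm]

end
noncomputable section
set_option synthInstance.maxHeartbeats 1000000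
set_option maxHeartbeats 1000000

/-! For `v ∈ M(Ψ)_ind` and `s ∈ I_z`, the `z`-coordinate of `T_s v = u² v` reads
`(u² + 1) v_z = u ∑_{s ∉ I_x} μ(z, x) v_x`. Measure sizes by the valuation at infinity (the
degree in `u`; the weights `μ` are constants) and take `z` with `v_z` of maximal degree: the left
side has degree `deg v_z + 2`, the right side at most `deg v_z + 1`, so `I_z = ∅` unless `v = 0`.
Hence a vector of `M(Ψ)_ind` is determined by its coordinates at the vertices with `I_x = ∅`. -/

namespace WGraphData

variable {B X F : Type*} [Field F] [Fintype X] (Ψ : WGraphData B X F)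
variable {K : Type*} [Field K] [Algebra F K] (q : K)

theorem tauFun_apply_of_mem {i : B} {z : X} (hz : i ∈ Ψ.I z) (x : X) :
    Ψ.tauFun K q i x z =
      if i ∈ Ψ.I x then -Finsupp.single x 1 z else q * algebraMap F K (Ψ.mu z x) := by
  have hsum : (∑ y : X, if i ∈ Ψ.I y then
      algebraMap F K (Ψ.mu y x) • Finsupp.single y (1 : K) else 0) z =
        algebraMap F K (Ψ.mu z x) := by
    rw [Finsupp.finsetSum_apply,
      Finset.sum_eq_single z (fun y _ hyz => by split_ifs <;> simp [hyz]) (by simp)]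
    simp [hz, Algebra.algebraMap_eq_smul_one]
  unfold tauFun
  split_ifs with hx
  · rfl
  · have hxz : x ≠ z := by rintro rfl; exact hx hz
    rw [Finsupp.add_apply, Finsupp.smul_apply, Finsupp.smul_apply, hsum]
    simp [hxz]

theorem tau_apply_of_mem (v : X →₀ K) {i : B} {z : X} (hz : i ∈ Ψ.I z) :
    Ψ.tau K q i v z =
      -v z + q * ∑ x with i ∉ Ψ.I x, algebraMap F K (Ψ.mu z x) * v x := by
  rw [tau, Finsupp.lsum_apply, Finsupp.sum_fintype _ _ (by simp)]
  simp only [LinearMap.toSpanSingleton_apply, Finsupp.finsetSum_apply, Finsupp.smul_apply,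
    smul_eq_mul, tauFun_apply_of_mem Ψ q hz, mul_ite, Finset.sum_ite]
  congr 1
  · rw [Finset.sum_eq_single_of_mem z (by simpa using hz) (fun x _ hxz => by simp [hxz])]
    simp
  · rw [Finset.mul_sum]
    exact Finset.sum_congr rfl fun x _ => by ring

theorem sq_add_one_mul_apply_eq_of_tau_eq {v : X →₀ K} {i : B}
    (hv : Ψ.tau K q i v = q ^ 2 • v) {z : X} (hz : i ∈ Ψ.I z) :
    (q ^ 2 + 1) * v z = q * ∑ x with i ∉ Ψ.I x, algebraMap F K (Ψ.mu z x) * v x := by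
  have h := congr($hv z)
  rw [tau_apply_of_mem Ψ q v hz, Finsupp.smul_apply, smul_eq_mul] at h
  linear_combination -h

end WGraphData

open WithZero in
theorem RatFunc.inftyValuation_X_sq_add_one (k : Type*) [Field k] :
    inftyValuation k (RatFunc.X ^ 2 + 1) = exp 2 := by
  rw [Valuation.map_add_eq_of_lt_left] <;>
    simp only [map_pow, inftyValuation.X, map_one, ← exp_nsmul]
  · rfl
  · rw [← exp_zero, exp_lt_exp]; norm_num

open WithZero RatFunc in
theorem WGraphData.eq_zero_of_tau_eq_X_sq_smul {B X k : Type*} [Field k] [Fintype X]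
    (Ψ : WGraphData B X k) {v : X →₀ RatFunc k}
    (hv : ∀ i, Ψ.tau (RatFunc k) RatFunc.X i v = (RatFunc.X ^ 2 : RatFunc k) • v)
    (hv₀ : ∀ x, Ψ.I x = ∅ → v x = 0) :
    v = 0 := by
  set ν := inftyValuation k
  by_contra hne
  obtain ⟨x₀, hx₀⟩ := DFunLike.ne_iff.1 hne
  have : Nonempty X := ⟨x₀⟩
  obtain ⟨z, hz⟩ := Finite.exists_max fun x => ν (v x)
  have hvz : ν (v z) ≠ 0 :=
    ne_bot_of_le_ne_bot ((Valuation.ne_zero_iff ν).2 hx₀) (hz x₀)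
  obtain ⟨i, hi⟩ : (Ψ.I z).Nonempty :=
    Set.nonempty_iff_ne_empty.2 fun h => hvz (by rw [hv₀ z h, map_zero])
  have h := congr(ν $(Ψ.sq_add_one_mul_apply_eq_of_tau_eq RatFunc.X (hv i) hi))
  have : exp 2 * ν (v z) ≤ exp 1 * ν (v z) := by
    calc exp 2 * ν (v z) = ν ((RatFunc.X ^ 2 + 1) * v z) := by
          rw [map_mul, inftyValuation_X_sq_add_one]
    _ = _ := h
    _ ≤ exp 1 * ν (v z) := by
      rw [map_mul, inftyValuation.X]
      gcongr
      refine Valuation.map_sum_le _ fun x _ => ?_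
      rw [map_mul]
      exact mul_le_of_le_one_of_le
        (Valuation.IsTrivialOn.valuation_algebraMap_le_one ν _) (hz x)
  simpa using (mul_le_mul_iff_left₀ (zero_lt_iff.2 hvz)).1 this

theorem Submodule.finrank_le_card_of_forall_vanishing_eq_zero {K X : Type*} [Field K]
    [Fintype X] (P : Submodule K (X →₀ K)) (p : X → Prop)
    (hP : ∀ v ∈ P, (∀ x, p x → v x = 0) → v = 0) :
    Module.finrank K P ≤ Nat.card {x // p x} := by
  let restrict : P →ₗ[K] ({x // p x} → K) :=
    (LinearMap.pi fun x => Finsupp.lapply x.1) ∘ₗ P.subtype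
  have hinj : Function.Injective restrict := fun a b hab =>
    Subtype.ext <| sub_eq_zero.1 <| hP _ (sub_mem a.2 b.2) fun x hx => by
      simpa [sub_eq_zero, restrict] using congr_fun hab ⟨x, hx⟩
  simpa [Nat.card_eq_fintype_card] using LinearMap.finrank_le_finrank_of_injective hinj

theorem wgraph_ind_multiplicity_le_general
    {B W X : Type*} [Group W] {M : CoxeterMatrix B} (cs : CoxeterSystem M W)
    (F : Subfield ℂ)
    -- `H` is the Hecke algebra of `(W, S)` over `F(u)`, with standard basis `T`
    (H : Type*) [Ring H] [Algebra (RatFunc F) H]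
    (T : W → H)
    -- `Ψ` is a `W`-graph over `F`, with `H^F`-module `M(Ψ)` given by `σ`
    [Fintype X] (Ψ : WGraphData B X F)
    (σ : H →ₐ[RatFunc F] Module.End (RatFunc F) (X →₀ RatFunc F))
    (hσ : ∀ i : B, σ (T (cs.simple i)) = Ψ.tau (RatFunc F) RatFunc.X i)
    -- `ind` is the index character of `H^F`
    (ind : H →ₐ[RatFunc F] RatFunc F)
    (hind : ∀ w : W, ind (T w) = (RatFunc.X : RatFunc F) ^ (2 * cs.length w)) :
    Module.finrank (RatFunc F) (charSpace σ ind) ≤ Ψ.N ∅ := by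
  refine Submodule.finrank_le_card_of_forall_vanishing_eq_zero _ _ fun v hv hv₀ =>
    Ψ.eq_zero_of_tau_eq_X_sq_smul (fun i => ?_) hv₀
  rw [← hσ, hv, hind, cs.length_simple]

/-- If `F` is a subfield of `ℂ` and `Ψ` is a `W`-graph over `F`, then
`⟨M(Ψ), ind⟩ = dim_{F(u)} M(Ψ)_{ind} ≤ N_Ψ(∅)`, the number of vertices `x` of `Ψ` with
`I_x = ∅`. -/
theorem wgraph_ind_multiplicity_le
    {B W X : Type*} [Group W] {M : CoxeterMatrix B} (cs : CoxeterSystem M W)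
    (F : Subfield ℂ)
    -- `H` is the Hecke algebra of `(W, S)` over `F(u)`, with standard basis `T`
    (H : Type*) [Ring H] [Algebra (RatFunc F) H]
    (T : W → H) (bT : Module.Basis W (RatFunc F) H) (hbT : ∀ w, bT w = T w)
    (hT1 : T 1 = 1)
    (hTmul : ∀ (i : B) (w : W), cs.length w < cs.length (cs.simple i * w) →
      T (cs.simple i) * T w = T (cs.simple i * w))
    (hTsq : ∀ i : B, T (cs.simple i) * T (cs.simple i) =
      (RatFunc.X ^ 2 : RatFunc F) • (1 : H) +
        ((RatFunc.X ^ 2 - 1 : RatFunc F)) • T (cs.simple i))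
    -- `Ψ` is a `W`-graph over `F`, with `H^F`-module `M(Ψ)` given by `σ`
    [Fintype X] (Ψ : WGraphData B X F)
    (σ : H →ₐ[RatFunc F] Module.End (RatFunc F) (X →₀ RatFunc F))
    (hσ : ∀ i : B, σ (T (cs.simple i)) = Ψ.tau (RatFunc F) RatFunc.X i)
    -- `ind` is the index character of `H^F`
    (ind : H →ₐ[RatFunc F] RatFunc F)
    (hind : ∀ w : W, ind (T w) = (RatFunc.X : RatFunc F) ^ (2 * cs.length w)) :
    Module.finrank (RatFunc F) (charSpace σ ind) ≤ Ψ.N ∅ :=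
  wgraph_ind_multiplicity_le_general cs F H T Ψ σ hσ ind hind

end
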